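/- For all $x \geq 0$, $\frac{x^2}{1+\sqrt{1+x^2}} - \log\left(\frac{2}{1+\sqrt{1+x^2}}\right) \geq \frac{3x^2}{4+3x}$. -/
import Mathlib


theorem elementary_ineq_laplace (x : ℝ) (hx : 0 ≤ x) :
    x ^ 2 / (1 + Real.sqrt (1 + x ^ 2))
      - Real.log (2 / (1 + Real.sqrt (1 + x ^ 2)))
      ≥ 3 * x ^ 2 / (4 + 3 * x) := by
  set s := Real.sqrt (1 + x ^ 2) with hs
  have h0 : (0:ℝ) ≤ 1 + x ^ 2 := by positivity
  have hs0 : 0 ≤ s := Real.sqrt_nonneg _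
  have hs2 : s ^ 2 = 1 + x ^ 2 := Real.sq_sqrt h0
  have hs1 : 1 ≤ s := by nlinarith
  have hsx : x ≤ s := by nlinarith
  have hsle : s ≤ 1 + x := by nlinarith
  have hpos : (0:ℝ) < 1 + s := by linarith
  have h1 : x ^ 2 / (1 + s) = s - 1 := by
    field_simp
    nlinarith
  have hlog : Real.log (2 / (1 + s)) ≤ 2 / (1 + s) - 1 :=
    Real.log_le_sub_one_of_pos (by positivity)
  have h2 : 3 * x ^ 2 / (4 + 3 * x) ≤ s - 2 / (1 + s) := by
    have heq : s - 2 / (1 + s) = (x ^ 2 + s - 1) / (1 + s) := by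
      field_simp
      nlinarith
    rw [heq, div_le_div_iff₀ (by linarith : (0:ℝ) < 4 + 3 * x) hpos]
    nlinarith [mul_nonneg (mul_nonneg hx hs0) (sub_nonneg.2 hsx),
      mul_nonneg hx (sub_nonneg.2 hsx), mul_nonneg (sub_nonneg.2 hs1) (sub_nonneg.2 hsx)]
  rw [ge_iff_le, h1]
  linarith
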